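/- arXiv:1006.0684 — 2 statements merged into one kernel-verified Lean document; each statement's English description precedes it below -/
import Mathlib

section
/- Let f_i : ℝ × ℕ → ℝ for i = 1,...,M be contractive in the first variable with common constant α < 1 and P-periodic in the second variable, and fix k with 1 ≤ k ≤ M. Then every solution of x_n = k-rank{f₁(x_{n-1}, n), ..., f_M(x_{n-M}, n)} converges to a unique P-periodic orbit independent of the initial condition (x₁,...,x_M). -/
/-
The `k`-rank is `1`-Lipschitz for the sup norm, because `t ≤ krank M k v` exactly when at least
`k` entries of `v` are `≥ t`. Hence the distance between two solutions of the recursion shrinks by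
the factor `α` over every block of `M` consecutive indices, and any two solutions are asymptotic.
The map sending an initial window `(x₀, …, x_{M-1})` to the window `M * P` steps later is therefore
an `α`-contraction, and Banach's fixed point theorem yields an `M * P`-periodic solution. Its shift
by `P` is again a solution, asymptotic to it, and the difference is periodic, so the solution is
`P`-periodic. Uniqueness holds because a periodic sequence tending to `0` vanishes.
-/

/-- The `k`-rank of a vector: its `k`-th largest entry (1-indexed, with multiplicity). -/
noncomputable def krank (M k : ℕ) (v : Fin M → ℝ) : ℝ :=
  ((List.ofFn v).insertionSort (· ≥ ·)).getD (k - 1) 0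

open Finset Filter Function Topology

theorem List.Pairwise.le_getElem_iff_lt_countP {α : Type*} [LinearOrder α] {l : List α}
    (hl : l.Pairwise (· ≥ ·)) {j : ℕ} (hj : j < l.length) (t : α) :
    t ≤ l[j] ↔ j < l.countP (t ≤ ·) := by
  induction l generalizing j with
  | nil => simp at hj
  | cons a l ih =>
    obtain ⟨ha, hl⟩ := List.pairwise_cons.mp hl
    by_cases hta : t ≤ a
    · cases j with
      | zero => simp [hta]
      | succ j =>
        simpa [hta] using ih hl (j := j) (by simpa using hj)
    · have hcount : l.countP (t ≤ ·) = 0 :=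
        List.countP_eq_zero.mpr fun b hb htb => hta ((of_decide_eq_true htb).trans (ha b hb))
      cases j with
      | zero => simp [hta, hcount]
      | succ j =>
        have hj : j < l.length := by simpa using hj
        simpa [hta, hcount] using
          fun htb : t ≤ l[j] => hta (htb.trans (ha _ (List.getElem_mem hj)))

theorem List.countP_ofFn {α : Type*} {n : ℕ} (v : Fin n → α) (p : α → Prop) [DecidablePred p] :
    (List.ofFn v).countP (fun a => decide (p a)) = #{i | p (v i)} := by
  rw [← Multiset.coe_countP, ← Fin.univ_val_map, Multiset.countP_map, Finset.card_def,
    Finset.filter_val]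

theorem Function.Periodic.eq_of_tendsto {X : Type*} [TopologicalSpace X] [T2Space X]
    {h : ℕ → X} {p : ℕ} (hh : Periodic h p) (hp : p ≠ 0) {a : X}
    (hlim : Tendsto h atTop (𝓝 a)) (n : ℕ) : h n = a := by
  have hconst : ∀ m, h (n + m * p) = h n := fun m => by simpa using hh.nat_mul m n
  have hsub : Tendsto (fun m => n + m * p) atTop atTop :=
    tendsto_atTop_mono
      (fun m => (Nat.le_mul_of_pos_right m (Nat.pos_of_ne_zero hp)).trans (Nat.le_add_left _ _))
      tendsto_id
  exact tendsto_nhds_unique tendsto_const_nhds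
    (by simpa only [Function.comp_def, hconst] using hlim.comp hsub)

section krank

variable {M k : ℕ}

theorem le_krank_iff (hk1 : 1 ≤ k) (hkM : k ≤ M) (v : Fin M → ℝ) (t : ℝ) :
    t ≤ krank M k v ↔ k ≤ #{i | t ≤ v i} := by
  have hlen : k - 1 < ((List.ofFn v).insertionSort (· ≥ ·)).length := by simp; omega
  rw [krank, List.getD_eq_getElem _ _ hlen,
    (List.pairwise_insertionSort _ _).le_getElem_iff_lt_countP hlen,
    (List.perm_insertionSort _ _).countP_eq, List.countP_ofFn]
  omega

theorem krank_le_krank_add (hk1 : 1 ≤ k) (hkM : k ≤ M) {v w : Fin M → ℝ} {c : ℝ}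
    (h : ∀ i, v i ≤ w i + c) : krank M k v ≤ krank M k w + c := by
  set t := krank M k v
  have hv : k ≤ #{i | t ≤ v i} := (le_krank_iff hk1 hkM v t).mp le_rfl
  have hw : k ≤ #{i | t - c ≤ w i} := hv.trans <| card_le_card fun i => by
    simp only [mem_filter, mem_univ, true_and]
    intro hi
    linarith [h i]
  linarith [(le_krank_iff hk1 hkM w (t - c)).mpr hw]

theorem abs_krank_sub_krank_le (hk1 : 1 ≤ k) (hkM : k ≤ M) {v w : Fin M → ℝ} {c : ℝ}
    (h : ∀ i, |v i - w i| ≤ c) : |krank M k v - krank M k w| ≤ c := by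
  rw [abs_sub_le_iff]
  constructor
  · linarith [krank_le_krank_add hk1 hkM (v := v) (w := w) fun i => by
      linarith [(abs_le.mp (h i)).2]]
  · linarith [krank_le_krank_add hk1 hkM (v := w) (w := v) fun i => by
      linarith [(abs_le.mp (h i)).1]]

end krank

def SolvesRankEq (M k : ℕ) (f : Fin M → ℝ → ℕ → ℝ) (x : ℕ → ℝ) : Prop :=
  ∀ n, M ≤ n → x n = krank M k (fun i : Fin M => f i (x (n - 1 - (i : ℕ))) n)

noncomputable def rankSolution (M k : ℕ) (f : Fin M → ℝ → ℕ → ℝ) (c : Fin M → ℝ) : ℕ → ℝ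
  | n => if h : n < M then c ⟨n, h⟩
    else krank M k (fun i : Fin M => f i (rankSolution M k f c (n - 1 - (i : ℕ))) n)
  decreasing_by omega

noncomputable def rankWindow (M k : ℕ) (f : Fin M → ℝ → ℕ → ℝ) (L : ℕ) (c : Fin M → ℝ) :
    Fin M → ℝ :=
  fun j => rankSolution M k f c (j + L)

section solutions

variable {M k : ℕ} {f : Fin M → ℝ → ℕ → ℝ}

theorem rankSolution_of_lt (c : Fin M → ℝ) {n : ℕ} (hn : n < M) :
    rankSolution M k f c n = c ⟨n, hn⟩ := by
  rw [rankSolution, dif_pos hn]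

theorem solvesRankEq_rankSolution (c : Fin M → ℝ) : SolvesRankEq M k f (rankSolution M k f c) :=
  fun n hn => by rw [rankSolution, dif_neg (not_lt.mpr hn)]

theorem SolvesRankEq.comp_add {x : ℕ → ℝ} (hx : SolvesRankEq M k f x) {Q : ℕ}
    (hf : ∀ i y, Periodic (f i y) Q) : SolvesRankEq M k f (fun n => x (n + Q)) := by
  intro n hn
  dsimp only
  rw [hx (n + Q) (by omega)]
  congr 1
  funext i
  rw [show n + Q - 1 - (i : ℕ) = n - 1 - i + Q by omega, hf]

theorem SolvesRankEq.eq_of_forall_lt {x y : ℕ → ℝ} (hx : SolvesRankEq M k f x)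
    (hy : SolvesRankEq M k f y) (h : ∀ n < M, x n = y n) : x = y := by
  funext n
  induction n using Nat.strong_induction_on with
  | _ n ih =>
    rcases lt_or_ge n M with hn | hn
    · exact h n hn
    · rw [hx n hn, hy n hn]
      congr 1
      funext i
      rw [ih _ (by omega)]

variable {α : ℝ} (hk1 : 1 ≤ k) (hkM : k ≤ M) (hα0 : 0 ≤ α)
  (hcon : ∀ i n (x y : ℝ), |f i x n - f i y n| ≤ α * |x - y|)
include hk1 hkM hα0 hcon

theorem SolvesRankEq.abs_sub_le_mul {x y : ℕ → ℝ} (hx : SolvesRankEq M k f x)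
    (hy : SolvesRankEq M k f y) {n : ℕ} (hn : M ≤ n) {B : ℝ}
    (hB : ∀ i : Fin M, |x (n - 1 - i) - y (n - 1 - i)| ≤ B) : |x n - y n| ≤ α * B := by
  rw [hx n hn, hy n hn]
  exact abs_krank_sub_krank_le hk1 hkM fun i =>
    (hcon i n _ _).trans (mul_le_mul_of_nonneg_left (hB i) hα0)

theorem SolvesRankEq.abs_sub_le_pow_div_mul (hα1 : α ≤ 1) {x y : ℕ → ℝ}
    (hx : SolvesRankEq M k f x) (hy : SolvesRankEq M k f y) {A : ℝ} (hA0 : 0 ≤ A)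
    (hA : ∀ n < M, |x n - y n| ≤ A) (n : ℕ) : |x n - y n| ≤ α ^ (n / M) * A := by
  induction n using Nat.strong_induction_on with
  | _ n ih =>
    rcases lt_or_ge n M with hn | hn
    · simpa [Nat.div_eq_of_lt hn] using hA n hn
    · rw [Nat.div_eq_sub_div (by omega) hn, pow_succ', mul_assoc]
      refine hx.abs_sub_le_mul hk1 hkM hα0 hcon hy hn fun i => (ih _ (by omega)).trans ?_
      exact mul_le_mul_of_nonneg_right
        (pow_le_pow_of_le_one hα0 hα1 (Nat.div_le_div_right (by omega))) hA0

theorem SolvesRankEq.tendsto_sub (hα : α < 1) {x y : ℕ → ℝ} (hx : SolvesRankEq M k f x)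
    (hy : SolvesRankEq M k f y) : Tendsto (fun n => x n - y n) atTop (𝓝 0) := by
  set A := ∑ j ∈ range M, |x j - y j|
  have hA : ∀ n < M, |x n - y n| ≤ A := fun n hn =>
    single_le_sum (f := fun j => |x j - y j|) (fun _ _ => abs_nonneg _) (mem_range.mpr hn)
  have hpow : Tendsto (fun n => α ^ (n / M)) atTop (𝓝 0) :=
    (tendsto_pow_atTop_nhds_zero_of_lt_one hα0 hα).comp (Nat.tendsto_div_const_atTop (by omega))
  have hA0 : 0 ≤ A := sum_nonneg fun _ _ => abs_nonneg _
  refine squeeze_zero_norm (hx.abs_sub_le_pow_div_mul hk1 hkM hα0 hcon hα.le hy hA0 hA) ?_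
  simpa using hpow.mul_const A

theorem contractingWith_rankWindow (hα : α < 1) {L : ℕ} (hL : M ≤ L) :
    ContractingWith ⟨α, hα0⟩ (rankWindow M k f L) := by
  refine ⟨hα, LipschitzWith.of_dist_le_mul fun c d =>
    (dist_pi_le_iff (by positivity)).mpr fun j => ?_⟩
  have hcd : ∀ n < M, |rankSolution M k f c n - rankSolution M k f d n| ≤ dist c d :=
    fun n hn => by
      simpa only [rankSolution_of_lt _ hn, Real.dist_eq] using dist_le_pi_dist c d ⟨n, hn⟩
  have hjL : 1 ≤ (j + L) / M := (Nat.le_div_iff_mul_le (by omega)).mpr (by omega)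
  rw [Real.dist_eq]
  calc _ ≤ α ^ ((j + L) / M) * dist c d :=
        (solvesRankEq_rankSolution c).abs_sub_le_pow_div_mul hk1 hkM hα0 hcon hα.le
          (solvesRankEq_rankSolution d) dist_nonneg hcd _
    _ ≤ α ^ 1 * dist c d :=
        mul_le_mul_of_nonneg_right (pow_le_pow_of_le_one hα0 hα.le hjL) dist_nonneg
    _ = α * dist c d := by rw [pow_one]

theorem exists_solvesRankEq_periodic_of_le (hα : α < 1) {L : ℕ} (hL : M ≤ L)
    (hf : ∀ i y, Periodic (f i y) L) : ∃ y, SolvesRankEq M k f y ∧ Periodic y L := by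
  have hG := contractingWith_rankWindow hk1 hkM hα0 hcon hα hL
  have hy := solvesRankEq_rankSolution (k := k) (f := f) (ContractingWith.fixedPoint _ hG)
  refine ⟨_, hy, fun n => congrFun ((hy.comp_add hf).eq_of_forall_lt hy fun n hn => ?_) n⟩
  rw [rankSolution_of_lt _ hn]
  exact congrFun hG.fixedPoint_isFixedPt ⟨n, hn⟩

theorem exists_solvesRankEq_periodic (hα : α < 1) {P : ℕ} (hP : P ≠ 0)
    (hf : ∀ i y, Periodic (f i y) P) : ∃ y, SolvesRankEq M k f y ∧ Periodic y P := by
  obtain ⟨y, hy, hyL⟩ := exists_solvesRankEq_periodic_of_le hk1 hkM hα0 hcon hα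
    (Nat.le_mul_of_pos_right M (Nat.pos_of_ne_zero hP)) fun i z => by simpa using (hf i z).nat_mul M
  refine ⟨y, hy, fun n => sub_eq_zero.mp ?_⟩
  exact ((hyL.add_const P).sub hyL).eq_of_tendsto (Nat.mul_ne_zero (by omega) hP)
    ((hy.comp_add hf).tendsto_sub hk1 hkM hα0 hcon hα hy) n

end solutions

theorem rank_type_periodic_forced_general (M P k : ℕ) (hP : 1 ≤ P)
    (hk1 : 1 ≤ k) (hkM : k ≤ M)
    (α : ℝ) (hα : α < 1)
    (f : Fin M → ℝ → ℕ → ℝ)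
    (hcon : ∀ i n (x y : ℝ), |f i x n - f i y n| ≤ α * |x - y|)
    (hper : ∀ i x n, f i x (n + P) = f i x n) :
    ∃! xs : ℕ → ℝ,
      (∀ n, xs (n + P) = xs n) ∧
      (∀ x : ℕ → ℝ,
        (∀ n, M ≤ n → x n = krank M k (fun i : Fin M => f i (x (n - 1 - (i : ℕ))) n)) →
        Filter.Tendsto (fun n => x n - xs n) Filter.atTop (nhds 0)) := by
  have hα0 : 0 ≤ α := by simpa using (abs_nonneg _).trans (hcon ⟨0, by omega⟩ 0 1 0)
  obtain ⟨y, hy, hyP⟩ := exists_solvesRankEq_periodic hk1 hkM hα0 hcon hα (by omega) hper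
  refine ⟨y, ⟨hyP, fun x hx => SolvesRankEq.tendsto_sub hk1 hkM hα0 hcon hα hx hy⟩, ?_⟩
  rintro xs ⟨hxs, hconv⟩
  funext n
  exact (sub_eq_zero.mp ((hyP.sub hxs).eq_of_tendsto (by omega) (hconv y hy) n)).symm

theorem rank_type_periodic_forced (M P k : ℕ) (hM : 1 ≤ M) (hP : 1 ≤ P)
    (hk1 : 1 ≤ k) (hkM : k ≤ M)
    (α : ℝ) (hα : α < 1)
    (f : Fin M → ℝ → ℕ → ℝ)
    (hcon : ∀ i n (x y : ℝ), |f i x n - f i y n| ≤ α * |x - y|)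
    (hper : ∀ i x n, f i x (n + P) = f i x n) :
    ∃! xs : ℕ → ℝ,
      (∀ n, xs (n + P) = xs n) ∧
      (∀ x : ℕ → ℝ,
        (∀ n, M ≤ n → x n = krank M k (fun i : Fin M => f i (x (n - 1 - (i : ℕ))) n)) →
        Filter.Tendsto (fun n => x n - xs n) Filter.atTop (nhds 0)) :=
  rank_type_periodic_forced_general M P k hP hk1 hkM α hα f hcon hper
end

section
/- The constant value x* = k-rank{r₁,...,r_M} is a fixed point of the rank-type recurrence: if x_{n-1} = x_{n-2} = ... = x_{n-M} = x*, then k-rank{f₁(x*),...,f_M(x*)} = x*, where r_i is the fixed point of the contraction f_i. -/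
/-!
A contraction with fixed point `r` never carries a point `x` past `r`: `|f x - r| ≤ |x - r|`.
Hence each `fᵢ(x*)` lies weakly on the same side of `x*` as `rᵢ`. The `k`-th largest entry
of a vector is pinned down by two counts, `x ≤ krank ↔ k ≤ #{i | x ≤ vᵢ}` and
`x < krank ↔ k ≤ #{i | x < vᵢ}`, and at `x = x*` the first count can only grow and the second
only shrink when `r` is replaced by `fᵢ(x*)`, so the rank stays at `x*`.
-/

namespace List

variable {α : Type*}

theorem lt_countP_iff_of_pairwise_ge [Preorder α] {L : List α} (hL : L.Pairwise (· ≥ ·))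
    {p : α → Bool} (hp : Monotone p) {k : ℕ} (hk : k < L.length) :
    k < L.countP p ↔ p L[k] := by
  have hsplit : L = L.take k ++ L[k] :: L.drop (k + 1) := by
    rw [getElem_cons_drop, take_append_drop]
  have hsorted : (L.take k ++ L[k] :: L.drop (k + 1)).Pairwise (· ≥ ·) := by rwa [← hsplit]
  simp only [pairwise_append, pairwise_cons, mem_cons] at hsorted
  obtain ⟨-, ⟨hafter, -⟩, hbefore⟩ := hsorted
  have hcount : L.countP p =
      (L.take k).countP p + (L.drop (k + 1)).countP p + if p L[k] then 1 else 0 := by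
    conv_lhs => rw [hsplit]
    rw [countP_append, countP_cons]
    omega
  have hlen : (L.take k).length = k := length_take_of_le hk.le
  cases hpk : p L[k]
  · have : (L.drop (k + 1)).countP p = 0 :=
      countP_eq_zero.2 fun a ha hpa => by
        simpa [hpk] using Bool.le_iff_imp.1 (hp (hafter a ha)) hpa
    have : (L.take k).countP p ≤ k := countP_le_length.trans_eq hlen
    simp [hpk] at hcount ⊢
    omega
  · have : (L.take k).countP p = k :=
      (countP_eq_length.2 fun a ha =>
        Bool.le_iff_imp.1 (hp (hbefore a ha L[k] (.inl rfl))) hpk).trans hlen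
    simp [hpk] at hcount ⊢
    omega

theorem countP_ofFn_le_countP_ofFn {n : ℕ} {v w : Fin n → α} {p q : α → Bool}
    (h : ∀ i, p (v i) → q (w i)) : (ofFn v).countP p ≤ (ofFn w).countP q := by
  rw [ofFn_eq_map, ofFn_eq_map, countP_map, countP_map]
  exact countP_mono_left fun i _ => h i

end List

section krank

variable {M k : ℕ}

theorem krank_eq_getElem (v : Fin M → ℝ) (hk : k - 1 < M) :
    krank M k v = ((List.ofFn v).insertionSort (· ≥ ·))[k - 1]'(by simpa using hk) :=
  List.getD_eq_getElem _ _ _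

theorem krank_eq_zero_of_le (v : Fin M → ℝ) (hk : M ≤ k - 1) : krank M k v = 0 :=
  List.getD_eq_default _ _ (by simpa using hk)

theorem lt_countP_ofFn_iff_krank (v : Fin M → ℝ) (hk : k - 1 < M) {p : ℝ → Bool}
    (hp : Monotone p) : k - 1 < (List.ofFn v).countP p ↔ p (krank M k v) := by
  rw [krank_eq_getElem v hk, ← List.lt_countP_iff_of_pairwise_ge
    (List.pairwise_insertionSort _ _) hp, (List.perm_insertionSort _ _).countP_eq]

theorem le_krank_iff_s12 (v : Fin M → ℝ) (hk : k - 1 < M) (x : ℝ) :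
    x ≤ krank M k v ↔ k - 1 < (List.ofFn v).countP fun a => decide (x ≤ a) := by
  rw [lt_countP_ofFn_iff_krank v hk fun a b hab => Bool.le_iff_imp.2 fun h => by
    simpa using (of_decide_eq_true h).trans hab, decide_eq_true_eq]

theorem lt_krank_iff (v : Fin M → ℝ) (hk : k - 1 < M) (x : ℝ) :
    x < krank M k v ↔ k - 1 < (List.ofFn v).countP fun a => decide (x < a) := by
  rw [lt_countP_ofFn_iff_krank v hk fun a b hab => Bool.le_iff_imp.2 fun h => by
    simpa using (of_decide_eq_true h).trans_le hab, decide_eq_true_eq]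

theorem krank_eq_of_same_side (v w : Fin M → ℝ)
    (hup : ∀ i, krank M k v ≤ v i → krank M k v ≤ w i)
    (hdown : ∀ i, v i ≤ krank M k v → w i ≤ krank M k v) :
    krank M k w = krank M k v := by
  rcases lt_or_ge (k - 1) M with hk | hk
  · apply le_antisymm
    · refine le_of_not_gt fun hlt => lt_irrefl (krank M k v) ?_
      rw [lt_krank_iff w hk] at hlt
      refine (lt_krank_iff v hk _).2 (hlt.trans_le (List.countP_ofFn_le_countP_ofFn fun i => ?_))
      simpa using lt_imp_lt_of_le_imp_le (hdown i)
    · refine (le_krank_iff_s12 w hk _).2 (((le_krank_iff_s12 v hk _).1 le_rfl).trans_le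
        (List.countP_ofFn_le_countP_ofFn fun i => ?_))
      simpa using hup i
  · rw [krank_eq_zero_of_le v hk, krank_eq_zero_of_le w hk]

end krank

section abs

variable {α : Type*} [AddCommGroup α] [LinearOrder α] [IsOrderedAddMonoid α] {x y r : α}

theorem le_of_abs_sub_le_of_le (h : |y - r| ≤ |x - r|) (hxr : x ≤ r) : x ≤ y := by
  rw [abs_sub_comm x, abs_of_nonneg (sub_nonneg.2 hxr)] at h
  simpa only [neg_sub, sub_le_sub_iff_right] using (abs_le.1 h).1

theorem le_of_abs_sub_le_of_ge (h : |y - r| ≤ |x - r|) (hrx : r ≤ x) : y ≤ x := by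
  rw [abs_of_nonneg (sub_nonneg.2 hrx)] at h
  simpa only [sub_le_sub_iff_right] using (abs_le.1 h).2

end abs

theorem krank_fixed_point_general (M k : ℕ)
    (α : ℝ) (hα : α < 1)
    (f : Fin M → ℝ → ℝ)
    (hcon : ∀ i (x y : ℝ), |f i x - f i y| ≤ α * |x - y|)
    (r : Fin M → ℝ) (hr : ∀ i, f i (r i) = r i) :
    krank M k (fun i => f i (krank M k r)) = krank M k r := by
  have hcloser : ∀ i x, |f i x - r i| ≤ |x - r i| := fun i x => by
    simpa only [hr i] using (hcon i x (r i)).trans (mul_le_of_le_one_left (abs_nonneg _) hα.le)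
  exact krank_eq_of_same_side r _ (fun i => le_of_abs_sub_le_of_le (hcloser i _))
    (fun i => le_of_abs_sub_le_of_ge (hcloser i _))

theorem krank_fixed_point (M k : ℕ) (hM : 1 ≤ M) (hk1 : 1 ≤ k) (hkM : k ≤ M)
    (α : ℝ) (hα : α < 1)
    (f : Fin M → ℝ → ℝ)
    (hcon : ∀ i (x y : ℝ), |f i x - f i y| ≤ α * |x - y|)
    (r : Fin M → ℝ) (hr : ∀ i, f i (r i) = r i) :
    krank M k (fun i => f i (krank M k r)) = krank M k r :=
  krank_fixed_point_general M k α hα f hcon r hr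
end
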